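/- arXiv:2211.08324 — 3 statements merged into one kernel-verified Lean document; each statement's English description precedes it below -/
import Mathlib

section
/- Let p ≥ 1 and q ≥ 0 be integers, let H ⊆ E be an edge set, and let s, t ∈ V be distinct vertices. Then s and t are (p, q)-flex-connected in H if and only if every vertex set S ⊆ V with s ∈ S and t ∉ S satisfies |δ_H(S) ∩ 𝒮| ≥ p or |δ_H(S)| ≥ p + q. -/
open scoped Classical

/-- The edges of `H` with exactly one endpoint in `S` (the cut `δ_H(S)`).
Edges are abstract objects of type `E` with endpoint maps `g₁ g₂ : E → V`. -/
noncomputable def cutEdges {V E : Type*} (g₁ g₂ : E → V) (H : Finset E) (S : Finset V) :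
    Finset E :=
  H.filter fun e => (g₁ e ∈ S) ≠ (g₂ e ∈ S)

/-- `u` and `v` are connected by a path using only edges of `H`. -/
def ConnectedIn {V E : Type*} (g₁ g₂ : E → V) (H : Finset E) (u v : V) : Prop :=
  Relation.ReflTransGen (fun a b => ∃ e ∈ H, (g₁ e = a ∧ g₂ e = b) ∨ (g₁ e = b ∧ g₂ e = a)) u v

/-- `u` and `v` are `p`-edge-connected in `H`: for every `D ⊆ H` with `|D| ≤ p - 1`,
`u` and `v` are connected in `H \ D`. -/
def PEdgeConnected {V E : Type*} (g₁ g₂ : E → V) (p : ℕ) (H : Finset E) (u v : V) : Prop :=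
  ∀ D : Finset E, D ⊆ H → D.card ≤ p - 1 → ConnectedIn g₁ g₂ (H \ D) u v

/-- `u` and `v` are `(p,q)`-flex-connected in `H` (with unsafe edge set `Unsafe`):
for every `U ⊆ Unsafe` with `|U| ≤ q`, `u` and `v` are `p`-edge-connected in `H \ U`. -/
def FlexConnected {V E : Type*} (g₁ g₂ : E → V) (Unsafe : Finset E) (p q : ℕ)
    (H : Finset E) (u v : V) : Prop :=
  ∀ U : Finset E, U ⊆ Unsafe → U.card ≤ q → PEdgeConnected g₁ g₂ p (H \ U) u v

/-!
Removing edges can only separate `s` from `t` along a cut, so `p`-edge-connectivity is the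
statement that every `s`-`t` cut has at least `p` edges. Hence `s` and `t` are
`(p, q)`-flex-connected iff no cut `F` of `H` drops below `p` edges after deleting at most `q`
unsafe ones. The adversary's best choice deletes `min q |F \ Safe|` unsafe edges of `F`, leaving
`max (|F| - q) |F ∩ Safe|` edges.
-/

section Cuts

variable {V E : Type*} (g₁ g₂ : E → V)

theorem cutEdges_sdiff (H D : Finset E) (S : Finset V) :
    cutEdges g₁ g₂ (H \ D) S = cutEdges g₁ g₂ H S \ D := by
  ext e
  simp only [cutEdges, Finset.mem_filter, Finset.mem_sdiff]
  tauto

theorem cutEdges_self_sdiff (H : Finset E) (S : Finset V) :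
    cutEdges g₁ g₂ (H \ cutEdges g₁ g₂ H S) S = ∅ := by
  rw [cutEdges_sdiff, Finset.sdiff_self]

theorem ConnectedIn.cutEdges_nonempty {K : Finset E} {u v : V} (h : ConnectedIn g₁ g₂ K u v)
    {S : Finset V} (hu : u ∈ S) (hv : v ∉ S) : (cutEdges g₁ g₂ K S).Nonempty := by
  induction h with
  | refl => exact absurd hu hv
  | @tail b c _ hbc ih =>
    by_cases hb : b ∈ S
    · obtain ⟨e, he, ⟨h₁, h₂⟩ | ⟨h₁, h₂⟩⟩ := hbc <;>
        exact ⟨e, Finset.mem_filter.2 ⟨he, by simp [h₁, h₂, hb, hv]⟩⟩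
    · exact ih hb

/-- If `u` and `v` are not connected, the vertices reachable from `u` separate them. -/
theorem connectedIn_iff_forall_cutEdges_nonempty [Fintype V] (K : Finset E) (u v : V) :
    ConnectedIn g₁ g₂ K u v ↔
      ∀ S : Finset V, u ∈ S → v ∉ S → (cutEdges g₁ g₂ K S).Nonempty := by
  refine ⟨fun h S hu hv => h.cutEdges_nonempty g₁ g₂ hu hv, fun h => ?_⟩
  by_contra huv
  set S := Finset.univ.filter (ConnectedIn g₁ g₂ K u)
  have hS : ∀ w, w ∈ S ↔ ConnectedIn g₁ g₂ K u w := by simp [S]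
  obtain ⟨e, he⟩ := h S ((hS u).2 .refl) (mt (hS v).1 huv)
  obtain ⟨heK, hcross⟩ := Finset.mem_filter.1 he
  exact hcross (propext
    ⟨fun h₁ => (hS _).2 (((hS _).1 h₁).tail ⟨e, heK, .inl ⟨rfl, rfl⟩⟩),
      fun h₂ => (hS _).2 (((hS _).1 h₂).tail ⟨e, heK, .inr ⟨rfl, rfl⟩⟩)⟩)

theorem pEdgeConnected_iff_forall_le_card_cutEdges [Fintype V] {p : ℕ} (hp : 1 ≤ p)
    (H : Finset E) (u v : V) :
    PEdgeConnected g₁ g₂ p H u v ↔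
      ∀ S : Finset V, u ∈ S → v ∉ S → p ≤ (cutEdges g₁ g₂ H S).card := by
  constructor
  · intro h S hu hv
    by_contra! hcut
    have hconn := h (cutEdges g₁ g₂ H S) (Finset.filter_subset _ _) (by omega)
    simpa [cutEdges_self_sdiff] using hconn.cutEdges_nonempty g₁ g₂ hu hv
  · intro h D _ hD
    rw [connectedIn_iff_forall_cutEdges_nonempty]
    intro S hu hv
    rw [cutEdges_sdiff, ← Finset.card_pos]
    have := Finset.le_card_sdiff D (cutEdges g₁ g₂ H S)
    have := h S hu hv
    omega

end Cuts

theorem forall_disjoint_le_card_sdiff_iff {E : Type*} (F Safe : Finset E) (p q : ℕ) :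
    (∀ U : Finset E, Disjoint U Safe → U.card ≤ q → p ≤ (F \ U).card) ↔
      p ≤ (F ∩ Safe).card ∨ p + q ≤ F.card := by
  constructor
  · intro h
    by_contra! hlt
    obtain ⟨U, hUF, hUcard⟩ :=
      Finset.exists_subset_card_eq (min_le_right q (F \ Safe).card)
    have hU := h U (Finset.disjoint_of_subset_left hUF Finset.sdiff_disjoint) (by omega)
    rw [Finset.card_sdiff_of_subset (hUF.trans Finset.sdiff_subset)] at hU
    have hsplit := Finset.card_sdiff_add_card_inter F Safe
    omega
  · rintro h U hU hUq
    rcases h with hsafe | hall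
    · have hsub : F ∩ Safe ⊆ F \ U := fun e he =>
        Finset.mem_sdiff.2 ⟨(Finset.mem_inter.1 he).1,
          fun heU => Finset.disjoint_left.1 hU heU (Finset.mem_inter.1 he).2⟩
      exact hsafe.trans (Finset.card_le_card hsub)
    · have := Finset.le_card_sdiff U F
      omega

theorem flex_connected_iff_cut_condition_general {V E : Type*} [Fintype V] [Fintype E]
    (g₁ g₂ : E → V) (Safe Unsafe : Finset E) (hpart : Unsafe = Safeᶜ)
    (p q : ℕ) (hp : 1 ≤ p) (H : Finset E) (s t : V) :
    FlexConnected g₁ g₂ Unsafe p q H s t ↔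
      ∀ S : Finset V, s ∈ S → t ∉ S →
        p ≤ (cutEdges g₁ g₂ H S ∩ Safe).card ∨ p + q ≤ (cutEdges g₁ g₂ H S).card := by
  subst hpart
  simp only [FlexConnected, pEdgeConnected_iff_forall_le_card_cutEdges g₁ g₂ hp, cutEdges_sdiff,
    Finset.subset_compl_iff_disjoint_right, ← forall_disjoint_le_card_sdiff_iff]
  exact ⟨fun h S hs ht U hU hUq => h U hU hUq S hs ht, fun h U hU hUq S hs ht => h S hs ht U hU hUq⟩

/-- `s` and `t` are `(p,q)`-flex-connected in `H` iff every vertex set `S` with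
`s ∈ S`, `t ∉ S` has at least `p` safe edges or at least `p + q` edges in `δ_H(S)`. -/
theorem flex_connected_iff_cut_condition {V E : Type*} [Fintype V] [Fintype E]
    (g₁ g₂ : E → V) (Safe Unsafe : Finset E) (hpart : Unsafe = Safeᶜ)
    (p q : ℕ) (hp : 1 ≤ p) (H : Finset E) (s t : V) (hst : s ≠ t) :
    FlexConnected g₁ g₂ Unsafe p q H s t ↔
      ∀ S : Finset V, s ∈ S → t ∉ S →
        p ≤ (cutEdges g₁ g₂ H S ∩ Safe).card ∨ p + q ≤ (cutEdges g₁ g₂ H S).card :=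
  flex_connected_iff_cut_condition_general g₁ g₂ Safe Unsafe hpart p q hp H s t
end

section
/- Let p ≥ 1 and q ≥ 0 be integers and let H' ⊆ E ∖ H. Then every terminal pair (s_i, t_i) is (p, q + 1)-flex-connected in H ∪ H' if and only if H' is a feasible augmentation for every violating edge set F. -/
open scoped Classical

/-- A vertex set `S` is violated (w.r.t. the partial solution `H`, safe edges `Safe`,
parameters `p q` and terminal pairs `st`): exactly one of `s_i, t_i` lies in `S` for
some `i`, `|δ_H(S)| = p + q`, and `|δ_H(S) ∩ Safe| ≤ p - 1`. -/
def Violated {V E : Type*} (g₁ g₂ : E → V) (Safe : Finset E) (p q : ℕ) {k : ℕ}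
    (st : Fin k → V × V) (H : Finset E) (S : Finset V) : Prop :=
  (∃ i : Fin k, ((st i).1 ∈ S) ≠ ((st i).2 ∈ S)) ∧
    (cutEdges g₁ g₂ H S).card = p + q ∧
    (cutEdges g₁ g₂ H S ∩ Safe).card ≤ p - 1

/-! A set `U ∪ D` with `U` unsafe, `|U| ≤ q + 1` and `|D| ≤ p - 1` that separates `s_i` from
`t_i` in `H ∪ H'` contains the whole cut of the component `S` of `s_i`; in particular the
`H`-cut of `S` has at most `p + q` edges, at most `p - 1` of them safe. As the pair is
`(p, q)`-flex-connected in `H`, that cut has at least `p + q` edges, so `S` is violated and its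
`H`-cut is its whole cut in `H ∪ H'`, which a feasible augmentation must cross. Conversely, a
violating edge set consists of `q + 1` unsafe edges and at most `p - 1` further ones. -/

open Finset

section Cuts

variable {V E : Type*} {g₁ g₂ : E → V}

theorem ConnectedIn.mem_iff_mem_of_sdiff_cutEdges {K : Finset E} {S : Finset V} {u v : V}
    (h : ConnectedIn g₁ g₂ (K \ cutEdges g₁ g₂ K S) u v) : u ∈ S ↔ v ∈ S := by
  have hside : ∀ e ∈ K \ cutEdges g₁ g₂ K S, (g₁ e ∈ S ↔ g₂ e ∈ S) := by
    intro e he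
    simp only [mem_sdiff, cutEdges, mem_filter, not_and, ne_eq, not_not] at he
    exact iff_of_eq (he.2 he.1)
  induction h with
  | refl => rfl
  | tail _ hstep ih =>
    obtain ⟨e, he, ⟨rfl, rfl⟩ | ⟨rfl, rfl⟩⟩ := hstep
    · exact ih.trans (hside e he)
    · exact ih.trans (hside e he).symm

theorem FlexConnected.connectedIn_sdiff {Unsafe K F : Finset E} {p r : ℕ} {u v : V}
    (h : FlexConnected g₁ g₂ Unsafe p r K u v) (hFK : F ⊆ K) (hcard : #F ≤ p - 1 + r)
    (hsafe : #(F \ Unsafe) ≤ p - 1) : ConnectedIn g₁ g₂ (K \ F) u v := by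
  obtain ⟨U, hU, hUcard⟩ := exists_subset_card_eq (min_le_right r #(F ∩ Unsafe))
  have hUF : U ⊆ F := hU.trans inter_subset_left
  have hD : #(F \ U) ≤ p - 1 := by
    have hsplit := card_inter_add_card_sdiff F Unsafe
    rw [card_sdiff_of_subset hUF, hUcard]
    omega
  have hconn := h U (hU.trans inter_subset_right) (hUcard ▸ min_le_left _ _) (F \ U)
    (sdiff_subset_sdiff hFK le_rfl) hD
  rwa [sdiff_sdiff_sdiff_cancel_right hUF] at hconn

theorem FlexConnected.le_card_cutEdges {Unsafe K : Finset E} {p q : ℕ} {u v : V}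
    {S : Finset V} (h : FlexConnected g₁ g₂ Unsafe p q K u v) (hp : 1 ≤ p) (hu : u ∈ S)
    (hv : v ∉ S) (hsafe : #(cutEdges g₁ g₂ K S \ Unsafe) ≤ p - 1) :
    p + q ≤ #(cutEdges g₁ g₂ K S) := by
  by_contra! hsmall
  have hconn :=
    h.connectedIn_sdiff (F := cutEdges g₁ g₂ K S) (filter_subset _ _) (by omega) hsafe
  exact hv (hconn.mem_iff_mem_of_sdiff_cutEdges.mp hu)

noncomputable def reachSet [Fintype V] (g₁ g₂ : E → V) (K : Finset E) (s : V) : Finset V :=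
  univ.filter (ConnectedIn g₁ g₂ K s)

theorem cutEdges_reachSet_sdiff_subset [Fintype V] (L F : Finset E) (s : V) :
    cutEdges g₁ g₂ L (reachSet g₁ g₂ (L \ F) s) ⊆ F := by
  intro e he
  simp only [cutEdges, reachSet, mem_filter, mem_univ, true_and] at he
  by_contra heF
  have heK : e ∈ L \ F := mem_sdiff.mpr ⟨he.1, heF⟩
  exact he.2 (propext ⟨fun hc => hc.tail ⟨e, heK, .inl ⟨rfl, rfl⟩⟩,
    fun hc => hc.tail ⟨e, heK, .inr ⟨rfl, rfl⟩⟩⟩)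

end Cuts

theorem flex_augment_iff_feasible_augmentation_general {V E : Type*} [Fintype V] [Fintype E]
    (g₁ g₂ : E → V) (Safe Unsafe : Finset E) (hpart : Unsafe = Safeᶜ)
    (p q : ℕ) (hp : 1 ≤ p) (k : ℕ) (st : Fin k → V × V) (H : Finset E)
    (hH : ∀ i : Fin k, FlexConnected g₁ g₂ Unsafe p q H (st i).1 (st i).2)
    (H' : Finset E) :
    (∀ i : Fin k, FlexConnected g₁ g₂ Unsafe p (q + 1) (H ∪ H') (st i).1 (st i).2) ↔
      ∀ F : Finset E,
        (∃ S : Finset V, Violated g₁ g₂ Safe p q st H S ∧ F = cutEdges g₁ g₂ H S) →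
        ∀ i : Fin k, ConnectedIn g₁ g₂ ((H ∪ H') \ F) (st i).1 (st i).2 := by
  subst hpart
  have hsafe_eq (F : Finset E) : F \ Safeᶜ = F ∩ Safe := sdiff_compl
  constructor
  · rintro h F ⟨S, ⟨-, hcard, hsafe⟩, rfl⟩ i
    exact (h i).connectedIn_sdiff ((filter_subset _ _).trans subset_union_left) (by omega)
      (by rwa [hsafe_eq])
  · intro hfeas i U hU hUcard D _ hDcard
    rw [sdiff_sdiff_left]
    by_contra hst
    set S := reachSet g₁ g₂ ((H ∪ H') \ (U ∪ D)) (st i).1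
    have hs : (st i).1 ∈ S := mem_filter.mpr ⟨mem_univ _, .refl⟩
    have ht : (st i).2 ∉ S := fun h => hst (mem_filter.mp h).2
    have hsub : cutEdges g₁ g₂ H S ⊆ cutEdges g₁ g₂ (H ∪ H') S :=
      filter_subset_filter _ subset_union_left
    have hcut : cutEdges g₁ g₂ (H ∪ H') S ⊆ U ∪ D := cutEdges_reachSet_sdiff_subset _ _ _
    have hsafe : #(cutEdges g₁ g₂ H S \ Safeᶜ) ≤ p - 1 := by
      refine (card_le_card (sdiff_le_iff.mpr ?_)).trans hDcard
      exact (hsub.trans hcut).trans (union_subset_union_left hU)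
    have hsmall : #(cutEdges g₁ g₂ (H ∪ H') S) ≤ p + q :=
      (card_le_card hcut).trans ((card_union_le U D).trans (by omega))
    have hcard : #(cutEdges g₁ g₂ H S) = p + q :=
      le_antisymm ((card_le_card hsub).trans hsmall) ((hH i).le_card_cutEdges hp hs ht hsafe)
    have hviol : Violated g₁ g₂ Safe p q st H S :=
      ⟨⟨i, fun h => ht (h ▸ hs)⟩, hcard, by rwa [← hsafe_eq]⟩
    have hconn := hfeas _ ⟨S, hviol, rfl⟩ i
    rw [eq_of_subset_of_card_le hsub (by omega)] at hconn
    exact ht (hconn.mem_iff_mem_of_sdiff_cutEdges.mp hs)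

/-- Every terminal pair is `(p, q+1)`-flex-connected in `H ∪ H'` iff `H'` is a feasible
augmentation for every violating edge set `F`. -/
theorem flex_augment_iff_feasible_augmentation {V E : Type*} [Fintype V] [Fintype E]
    (g₁ g₂ : E → V) (Safe Unsafe : Finset E) (hpart : Unsafe = Safeᶜ)
    (p q : ℕ) (hp : 1 ≤ p) (k : ℕ) (st : Fin k → V × V) (H : Finset E)
    (hH : ∀ i : Fin k, FlexConnected g₁ g₂ Unsafe p q H (st i).1 (st i).2)
    (H' : Finset E) (hH' : Disjoint H' H) :
    (∀ i : Fin k, FlexConnected g₁ g₂ Unsafe p (q + 1) (H ∪ H') (st i).1 (st i).2) ↔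
      ∀ F : Finset E,
        (∃ S : Finset V, Violated g₁ g₂ Safe p q st H S ∧ F = cutEdges g₁ g₂ H S) →
        ∀ i : Fin k, ConnectedIn g₁ g₂ ((H ∪ H') \ F) (st i).1 (st i).2 :=
  flex_augment_iff_feasible_augmentation_general g₁ g₂ Safe Unsafe hpart p q hp k st H hH H'
end

section
/- Let F ⊆ H be a violating edge set and let E' ⊆ E(𝒯) ∖ M^{-1}(F). Suppose that for every pair (A, B) ∈ Z_F there exist tree vertices a, b ∈ V(𝒯) with M1(a) ∈ A and M1(b) ∈ B such that a and b are connected in the graph (V(𝒯), E'). Then for every i ∈ [k], s_i and t_i are connected in (M(E') ∪ H) ∖ F. -/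
open scoped Classical

/-- `(t₁, t₂ : TE → TV)` describes a (multi)graph which is a tree: it is connected and
every edge is a bridge. -/
def IsTree' {TV TE : Type*} [Fintype TE] (t₁ t₂ : TE → TV) : Prop :=
  (∀ a b : TV, ConnectedIn t₁ t₂ Finset.univ a b) ∧
    ∀ f : TE, ¬ ConnectedIn t₁ t₂ (Finset.univ \ {f}) (t₁ f) (t₂ f)

/-- `V_f`: the `M1`-images of the leaves (elements of `L`) lying in the connected component
of the tree with `f` deleted that contains the endpoint `t₁ f`. -/
noncomputable def compVerts {V TV TE : Type*} [Fintype TE] (t₁ t₂ : TE → TV)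
    (M1 : TV → V) (L : Finset TV) (f : TE) : Finset V :=
  (L.filter fun a => ConnectedIn t₁ t₂ (Finset.univ \ {f}) a (t₁ f)).image M1

/-- The capacity `y(f) = Σ_{e ∈ δ_E(V_f)} x(e)` induced on a tree edge `f` by
capacities `x` on the edges of `G`. -/
noncomputable def treeCap {V E TV TE : Type*} [Fintype E] [Fintype TE]
    (g₁ g₂ : E → V) (t₁ t₂ : TE → TV) (M1 : TV → V) (L : Finset TV)
    (x : E → NNReal) (f : TE) : NNReal :=
  ∑ e ∈ cutEdges g₁ g₂ Finset.univ (compVerts t₁ t₂ M1 L f), x e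

/-- `M^{-1}(F)`: tree edges `f` with `M2(f) ∩ F ≠ ∅`. -/
noncomputable def Minv {E TE : Type*} [Fintype TE] (M2 : TE → Finset E) (F : Finset E) :
    Finset TE :=
  Finset.univ.filter fun f => (M2 f ∩ F).Nonempty

/-- `M(E') = ⋃_{f ∈ E'} M2(f)`. -/
noncomputable def Mimg {E TE : Type*} (M2 : TE → Finset E) (E' : Finset TE) : Finset E :=
  E'.biUnion M2

/-- The connected component containing `v` of the graph on `V` with edge set `H`. -/
noncomputable def Qcomp {V E : Type*} [Fintype V] (g₁ g₂ : E → V) (H : Finset E) (v : V) :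
    Finset V :=
  Finset.univ.filter fun u => ConnectedIn g₁ g₂ H u v

/-- A vertex set `Q` is shattered (w.r.t. the tree and `M^{-1}(F)`): the leaves whose
`M1`-images lie in `Q` are not all in a single connected component of the tree with the
edges of `M^{-1}(F)` deleted. -/
def IsShattered {V E TV TE : Type*} [Fintype TE] (t₁ t₂ : TE → TV) (M1 : TV → V)
    (L : Finset TV) (M2 : TE → Finset E) (F : Finset E) (Q : Finset V) : Prop :=
  ∃ a ∈ L, ∃ b ∈ L, M1 a ∈ Q ∧ M1 b ∈ Q ∧
    ¬ ConnectedIn t₁ t₂ (Finset.univ \ Minv M2 F) a b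

/-- `Z_F`: the pairs `(A ∪ Q_{s_i}, B ∪ Q_{t_i})` over `i ∈ [k]` and pairs `(A, B)`
partitioning the union of the shattered components of `(V, H \ F)`, each shattered
component lying entirely in `A` or entirely in `B`, such that the two sets of the pair
are disjoint. -/
def ZF {V E TV TE : Type*} [Fintype V] [Fintype TE] (g₁ g₂ : E → V) (t₁ t₂ : TE → TV)
    (M1 : TV → V) (L : Finset TV) (M2 : TE → Finset E) {k : ℕ} (st : Fin k → V × V)
    (H F : Finset E) : Set (Finset V × Finset V) :=
  { P | ∃ i : Fin k, ∃ A B : Finset V,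
      Disjoint A B ∧
      A ∪ B = Finset.univ.filter
        (fun v => IsShattered t₁ t₂ M1 L M2 F (Qcomp g₁ g₂ (H \ F) v)) ∧
      (∀ v : V, IsShattered t₁ t₂ M1 L M2 F (Qcomp g₁ g₂ (H \ F) v) →
        Qcomp g₁ g₂ (H \ F) v ⊆ A ∨ Qcomp g₁ g₂ (H \ F) v ⊆ B) ∧
      P.1 = A ∪ Qcomp g₁ g₂ (H \ F) (st i).1 ∧
      P.2 = B ∪ Qcomp g₁ g₂ (H \ F) (st i).2 ∧
      Disjoint P.1 P.2 }

/-- The number of shattered connected components of `(V, H \ F)`. -/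
noncomputable def shatteredCount {V E TV TE : Type*} [Fintype V] [Fintype TE]
    (g₁ g₂ : E → V) (t₁ t₂ : TE → TV) (M1 : TV → V) (L : Finset TV)
    (M2 : TE → Finset E) (H F : Finset E) : ℕ :=
  ((Finset.univ.image fun v => Qcomp g₁ g₂ (H \ F) v).filter
    fun Q => IsShattered t₁ t₂ M1 L M2 F Q).card

/-! If `s_i` and `t_i` were disconnected in `G = (M(E') ∪ H) \ F`, sort the shattered components
of `H \ F` by whether they reach `s_i` in `G`; with `Q_{s_i}` and `Q_{t_i}` added this is a pair
of `Z_F`. The hypothesis joins its two sides by a tree path in `E'`, and each tree edge of `E'`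
maps into a path of `M(E') \ F` since `E'` avoids `M⁻¹(F)`, so the two sides meet in `G`,
which is absurd. -/

namespace ConnectedIn

variable {V E : Type*} {g₁ g₂ : E → V} {H : Finset E} {u v w : V}

theorem symm (h : ConnectedIn g₁ g₂ H u v) : ConnectedIn g₁ g₂ H v u := by
  refine (@Relation.ReflTransGen.stdSymm _ _ ⟨?_⟩).symm _ _ h
  rintro a b ⟨e, he, h⟩
  exact ⟨e, he, h.symm⟩

theorem trans (huv : ConnectedIn g₁ g₂ H u v) (hvw : ConnectedIn g₁ g₂ H v w) :
    ConnectedIn g₁ g₂ H u w :=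
  Relation.ReflTransGen.trans huv hvw

theorem mono {H' : Finset E} (hs : H ⊆ H') (h : ConnectedIn g₁ g₂ H u v) :
    ConnectedIn g₁ g₂ H' u v := by
  refine Relation.ReflTransGen.mono ?_ _ _ h
  rintro a b ⟨e, he, h⟩
  exact ⟨e, hs he, h⟩

theorem lift {TV TE : Type*} {t₁ t₂ : TE → TV} {E' : Finset TE} {φ : TV → V} {a b : TV}
    (hedge : ∀ f ∈ E', ConnectedIn g₁ g₂ H (φ (t₁ f)) (φ (t₂ f)))
    (h : ConnectedIn t₁ t₂ E' a b) : ConnectedIn g₁ g₂ H (φ a) (φ b) := by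
  induction h with
  | refl => exact Relation.ReflTransGen.refl
  | tail _ step ih =>
    obtain ⟨f, hf, ⟨rfl, rfl⟩ | ⟨rfl, rfl⟩⟩ := step
    · exact ih.trans (hedge f hf)
    · exact ih.trans (hedge f hf).symm

end ConnectedIn

section Components

variable {V E : Type*} [Fintype V] {g₁ g₂ : E → V} {K G : Finset E} {u v s : V}

theorem mem_Qcomp : u ∈ Qcomp g₁ g₂ K v ↔ ConnectedIn g₁ g₂ K u v := by
  simp [Qcomp]

theorem Qcomp_eq_of_mem (h : u ∈ Qcomp g₁ g₂ K v) : Qcomp g₁ g₂ K u = Qcomp g₁ g₂ K v := by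
  rw [mem_Qcomp] at h
  ext w
  simp only [mem_Qcomp]
  exact ⟨fun hw => hw.trans h, fun hw => hw.trans h.symm⟩

theorem connectedIn_iff_of_mem_Qcomp (hKG : K ⊆ G) (h : u ∈ Qcomp g₁ g₂ K v) :
    ConnectedIn g₁ g₂ G u s ↔ ConnectedIn g₁ g₂ G v s := by
  have huv := (mem_Qcomp.1 h).mono hKG
  exact ⟨huv.symm.trans, huv.trans⟩

end Components

theorem exists_mem_ZF_separating {V E TV TE : Type*} [Fintype V] [Fintype TE]
    (g₁ g₂ : E → V) (t₁ t₂ : TE → TV) (M1 : TV → V) (L : Finset TV) (M2 : TE → Finset E)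
    {k : ℕ} (st : Fin k → V × V) (H F G : Finset E) (hG : H \ F ⊆ G) (i : Fin k)
    (hst : ¬ ConnectedIn g₁ g₂ G (st i).1 (st i).2) :
    ∃ P ∈ ZF g₁ g₂ t₁ t₂ M1 L M2 st H F,
      (∀ v ∈ P.1, ConnectedIn g₁ g₂ G v (st i).1) ∧
      ∀ v ∈ P.2, ¬ ConnectedIn g₁ g₂ G v (st i).1 := by
  set Q := Qcomp g₁ g₂ (H \ F)
  set Sh : V → Prop := fun v => IsShattered t₁ t₂ M1 L M2 F (Q v)
  set C : V → Prop := fun v => ConnectedIn g₁ g₂ G v (st i).1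
  set A := Finset.univ.filter fun v => Sh v ∧ C v
  set B := Finset.univ.filter fun v => Sh v ∧ ¬ C v
  have hside₁ : ∀ v ∈ A ∪ Q (st i).1, C v := by
    simp only [Finset.mem_union, Finset.mem_filter, A]
    rintro v (⟨-, -, hv⟩ | hv)
    · exact hv
    · exact (mem_Qcomp.1 hv).mono hG
  have hside₂ : ∀ v ∈ B ∪ Q (st i).2, ¬ C v := by
    simp only [Finset.mem_union, Finset.mem_filter, B]
    rintro v (⟨-, -, hv⟩ | hv) hC
    · exact hv hC
    · exact hst (hC.symm.trans ((mem_Qcomp.1 hv).mono hG))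
  have hsplit : ∀ v, Sh v → Q v ⊆ A ∨ Q v ⊆ B := by
    intro v hv
    have hsame : ∀ u ∈ Q v, Sh u ∧ (C u ↔ C v) := fun u hu =>
      ⟨(congrArg (IsShattered t₁ t₂ M1 L M2 F) (Qcomp_eq_of_mem hu)).mpr hv,
        connectedIn_iff_of_mem_Qcomp hG hu⟩
    by_cases hC : C v
    · exact Or.inl fun u hu => Finset.mem_filter.2
        ⟨Finset.mem_univ u, (hsame u hu).1, (hsame u hu).2.2 hC⟩
    · exact Or.inr fun u hu => Finset.mem_filter.2
        ⟨Finset.mem_univ u, (hsame u hu).1, mt (hsame u hu).2.1 hC⟩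
  refine ⟨(A ∪ Q (st i).1, B ∪ Q (st i).2), ⟨i, A, B, ?_, ?_, hsplit, rfl, rfl, ?_⟩, hside₁, hside₂⟩
  · exact Finset.disjoint_filter.2 fun v _ hA hB => hB.2 hA.2
  · ext v
    simp only [A, B, Finset.mem_union, Finset.mem_filter, Finset.mem_univ, true_and]
    tauto
  · exact Finset.disjoint_left.2 fun v h₁ h₂ => hside₂ v h₂ (hside₁ v h₁)

theorem subset_Mimg_sdiff {E TE : Type*} [Fintype TE] {M2 : TE → Finset E} {E' : Finset TE}
    {F : Finset E} {f : TE} (hf : f ∈ E') (hfF : f ∉ Minv M2 F) : M2 f ⊆ Mimg M2 E' \ F := by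
  intro e he
  refine Finset.mem_sdiff.2 ⟨Finset.mem_biUnion.2 ⟨f, hf, he⟩, fun heF => hfF ?_⟩
  simp only [Minv, Finset.mem_filter, Finset.mem_univ, true_and]
  exact ⟨e, Finset.mem_inter.2 ⟨he, heF⟩⟩

theorem shattered_connectivity_suffices_general {V E TV TE : Type*}
    [Fintype V] [Fintype E] [Fintype TE]
    (g₁ g₂ : E → V)
    (t₁ t₂ : TE → TV)
    (M1 : TV → V) (L : Finset TV)
    (M2 : TE → Finset E)
    (hM2 : ∀ f : TE, ConnectedIn g₁ g₂ (M2 f) (M1 (t₁ f)) (M1 (t₂ f)))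
    (k : ℕ) (st : Fin k → V × V) (H : Finset E)
    (F : Finset E)
    (E' : Finset TE) (hE' : Disjoint E' (Minv M2 F))
    (hcon : ∀ P ∈ ZF g₁ g₂ t₁ t₂ M1 L M2 st H F, ∃ a b : TV,
      M1 a ∈ P.1 ∧ M1 b ∈ P.2 ∧ ConnectedIn t₁ t₂ E' a b) :
    ∀ i : Fin k, ConnectedIn g₁ g₂ ((Mimg M2 E' ∪ H) \ F) (st i).1 (st i).2 := by
  intro i
  by_contra hst
  set G := (Mimg M2 E' ∪ H) \ F
  have hHG : H \ F ⊆ G := Finset.sdiff_subset_sdiff Finset.subset_union_right le_rfl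
  have htransfer : ∀ a b, ConnectedIn t₁ t₂ E' a b → ConnectedIn g₁ g₂ G (M1 a) (M1 b) :=
    fun a b => ConnectedIn.lift fun f hf =>
      (hM2 f).mono ((subset_Mimg_sdiff hf (Finset.disjoint_left.1 hE' hf)).trans
        (Finset.sdiff_subset_sdiff Finset.subset_union_left le_rfl))
  obtain ⟨P, hP, hP₁, hP₂⟩ :=
    exists_mem_ZF_separating g₁ g₂ t₁ t₂ M1 L M2 st H F G hHG i hst
  obtain ⟨a, b, ha, hb, hab⟩ := hcon P hP
  exact hP₂ _ hb ((htransfer a b hab).symm.trans (hP₁ _ ha))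

/-- If `E' ⊆ E(𝒯) \ M⁻¹(F)` connects, for each pair `(A, B) ∈ Z_F`, some tree vertex
with `M1`-image in `A` to some tree vertex with `M1`-image in `B`, then each terminal
pair `(s_i, t_i)` is connected in `(M(E') ∪ H) \ F`. -/
theorem shattered_connectivity_suffices {V E TV TE : Type*}
    [Fintype V] [Fintype E] [Fintype TE]
    (g₁ g₂ : E → V) (Safe : Finset E)
    (t₁ t₂ : TE → TV) (htree : IsTree' t₁ t₂)
    (M1 : TV → V) (L : Finset TV) (hM1 : Set.BijOn M1 (↑L) Set.univ)
    (M2 : TE → Finset E)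
    (hM2 : ∀ f : TE, ConnectedIn g₁ g₂ (M2 f) (M1 (t₁ f)) (M1 (t₂ f)))
    (p q : ℕ) (k : ℕ) (st : Fin k → V × V) (H : Finset E)
    (F : Finset E) (hFH : F ⊆ H)
    (hFviol : ∃ S : Finset V, Violated g₁ g₂ Safe p q st H S ∧ F = cutEdges g₁ g₂ H S)
    (E' : Finset TE) (hE' : Disjoint E' (Minv M2 F))
    (hcon : ∀ P ∈ ZF g₁ g₂ t₁ t₂ M1 L M2 st H F, ∃ a b : TV,
      M1 a ∈ P.1 ∧ M1 b ∈ P.2 ∧ ConnectedIn t₁ t₂ E' a b) :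
    ∀ i : Fin k, ConnectedIn g₁ g₂ ((Mimg M2 E' ∪ H) \ F) (st i).1 (st i).2 :=
  shattered_connectivity_suffices_general g₁ g₂ t₁ t₂ M1 L M2 hM2 k st H F E' hE' hcon
end
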